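/- Let G be a finite simple graph without isolated vertices. Then every subgraph of G has at most one perfect matching if and only if G has no cycles of even length. -/

import Mathlib

open MvPolynomial CategoryTheory

noncomputable section

namespace MatchingPowers

/-- A vertex-weighted oriented graph: a simple graph without isolated vertices, together with
an orientation of each edge and positive integer weights on the vertices, where every source
(vertex with no incoming directed edge) has weight `1`. -/
structure WOGraph (V : Type*) where
  /-- the underlying simple graph -/
  graph : SimpleGraph V
  /-- the orientation: `dir i j` means there is a directed edge from `i` to `j` -/
  dir : V → V → Prop
  /-- the weight function -/
  w : V → ℕ
  dir_adj : ∀ ⦃i j⦄, dir i j → graph.Adj i j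
  adj_dir : ∀ ⦃i j⦄, graph.Adj i j → dir i j ∨ dir j i
  not_both : ∀ ⦃i j⦄, dir i j → ¬ dir j i
  one_le_w : ∀ i, 1 ≤ w i
  source_w : ∀ i, (∀ j, ¬ dir j i) → w i = 1
  no_isolated : ∀ i, ∃ j, graph.Adj i j

variable {V : Type*}

/-- The edge ideal of a weighted oriented graph: generated by the monomials `x_i x_j^{w j}`
for the directed edges `(i,j)`. -/
def edgeIdealD (K : Type) [Field K] (D : WOGraph V) : Ideal (MvPolynomial V K) :=
  Ideal.span {f | ∃ i j, D.dir i j ∧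
    f = monomial (Finsupp.single i 1 + Finsupp.single j (D.w j)) (1 : K)}

/-- The edge ideal of a simple graph: generated by the monomials `x_i x_j` for the
edges `{i,j}`. -/
def edgeIdealG (K : Type) [Field K] (G : SimpleGraph V) : Ideal (MvPolynomial V K) :=
  Ideal.span {f | ∃ i j, G.Adj i j ∧
    f = monomial (Finsupp.single i 1 + Finsupp.single j 1) (1 : K)}

/-- A finite set of edges of `G` which are pairwise disjoint. -/
def IsMatchingSet (G : SimpleGraph V) (M : Finset (Sym2 V)) : Prop :=
  (∀ e ∈ M, e ∈ G.edgeSet) ∧ ∀ e ∈ M, ∀ f ∈ M, e ≠ f → ∀ v, v ∈ e → v ∉ f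

/-- The matching number of a simple graph: the maximum size of a matching. -/
def matchingNumber (G : SimpleGraph V) : ℕ :=
  sSup {k | ∃ M : Finset (Sym2 V), IsMatchingSet G M ∧ M.card = k}

/-- Every subgraph of `G` has at most one perfect matching (a perfect matching of a subgraph
`H` being a matching `M ≤ H` whose vertex set is all of `H.verts`). -/
def HasAtMostOnePerfectMatching (G : SimpleGraph V) : Prop :=
  ∀ H M₁ M₂ : G.Subgraph,
    M₁ ≤ H → M₁.verts = H.verts → M₁.IsMatching →
    M₂ ≤ H → M₂.verts = H.verts → M₂.IsMatching → M₁ = M₂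

/-- The maximal number of edges of an induced path in `G`. -/
def maxInducedPathLength (G : SimpleGraph V) : ℕ :=
  sSup {m | ∃ p : Fin (m + 1) → V, Function.Injective p ∧
    ∀ i j : Fin (m + 1), G.Adj (p i) (p j) ↔ ((i : ℕ) + 1 = j ∨ (j : ℕ) + 1 = i)}

end MatchingPowers

/-!
If a subgraph has two different perfect matchings `M₁` and `M₂`, every vertex meets either no
edge or exactly two edges of `M₁ ∆ M₂`, one from each matching, so `M₁ ∆ M₂` contains a cycle
whose edges alternate between `M₁` and `M₂`. The `M₁`-edges of that cycle pair up its vertices,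
hence it is even. Conversely, deleting either one of two consecutive edges of an even cycle leaves
a path of odd length, and every other edge of such a path, starting with the first, gives a perfect
matching of the cycle; the two matchings obtained differ.
-/

namespace SimpleGraph

variable {V : Type*} {G : SimpleGraph V}

open scoped symmDiff

namespace Walk

def alternateEdges : ∀ {u v : V}, G.Walk u v → G.Subgraph
  | _, _, nil => ⊥
  | _, _, cons h nil => G.subgraphOfAdj h
  | _, _, cons h (cons _ p) => G.subgraphOfAdj h ⊔ p.alternateEdges

lemma adj_alternateEdges_snd {u v : V} (p : G.Walk u v) (hp : ¬p.Nil) :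
    p.alternateEdges.Adj u p.snd := by
  rcases p with _ | ⟨_, _ | ⟨_, _⟩⟩
  · exact absurd nil_nil hp
  · simp [alternateEdges]
  · simp [alternateEdges]

lemma IsPath.isMatching_alternateEdges {u v : V} {p : G.Walk u v} (hp : p.IsPath)
    (hodd : Odd p.length) :
    p.alternateEdges.IsMatching ∧ p.alternateEdges.verts = {w | w ∈ p.support} := by
  induction p using alternateEdges.induct with
  | case1 => simp at hodd
  | case2 u v h =>
    refine ⟨Subgraph.IsMatching.subgraphOfAdj h, ?_⟩
    ext
    simp [alternateEdges]
  | case3 u v w h x _ q ih =>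
    simp only [cons_isPath_iff, support_cons, List.mem_cons, not_or] at hp
    obtain ⟨hq, hq_verts⟩ := ih hp.1.1 (by simpa [Nat.odd_add_one] using hodd)
    refine ⟨(Subgraph.IsMatching.subgraphOfAdj h).sup hq ?_, ?_⟩
    · rw [hq.support_eq_verts, support_subgraphOfAdj, hq_verts]
      simp [hp.1.2, hp.2.2]
    · ext
      simp [alternateEdges, hq_verts, or_assoc]

lemma IsCycle.exists_isMatching_ne_of_even_length {u : V} {c : G.Walk u u} (hc : c.IsCycle)
    (he : Even c.length) :
    ∃ M₁ M₂ : G.Subgraph, M₁.IsMatching ∧ M₂.IsMatching ∧ M₁.verts = M₂.verts ∧ M₁ ≠ M₂ := by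
  have h3 := hc.three_le_length
  have hodd : Odd (c.length - 1) := by
    obtain ⟨k, hk⟩ := he
    exact ⟨k - 1, by omega⟩
  obtain ⟨hM₁, hv₁⟩ := hc.isPath_dropLast.isMatching_alternateEdges (by rwa [length_dropLast])
  obtain ⟨hM₂, hv₂⟩ := hc.isPath_tail.isMatching_alternateEdges (by rwa [length_tail])
  refine ⟨_, _, hM₁, hM₂, ?_, fun heq => ?_⟩
  · ext w
    rw [hv₁, hv₂, Set.mem_ofPred_eq, Set.mem_ofPred_eq,
      (support_tail_perm_support_dropLast c).mem_iff]
  · -- the first matching pairs `u` with `c.snd`, the second pairs `c.snd` with `c.getVert 2 ≠ u`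
    have h₁ := c.dropLast.adj_alternateEdges_snd
      (by rw [← length_eq_zero_iff, length_dropLast]; omega)
    have h₂ := c.tail.adj_alternateEdges_snd
      (by rw [← length_eq_zero_iff, length_tail]; omega)
    dsimp only [snd] at h₁ h₂
    rw [heq, getVert_dropLast (by omega)] at h₁
    rw [getVert_tail] at h₂
    exact hc.getVert_sub_one_ne_getVert_add_one (i := 1) (by omega)
      (by simpa using hM₂.eq_of_adj_left h₁.symm h₂)

lemma IsCycle.verts_toSubgraph_eq_toFinset_tail [DecidableEq V] {u : V} {p : G.Walk u u}
    (hp : p.IsCycle) : p.toSubgraph.verts = p.support.tail.toFinset := by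
  ext v
  rw [mem_verts_toSubgraph, List.coe_toFinset, Set.mem_ofPred_eq, mem_support_iff]
  exact or_iff_right_of_imp fun h => h ▸ end_mem_tail_support hp.not_nil

lemma IsCycle.ncard_verts_toSubgraph {u : V} {p : G.Walk u u} (hp : p.IsCycle) :
    p.toSubgraph.verts.ncard = p.length := by
  classical
  rw [hp.verts_toSubgraph_eq_toFinset_tail, Set.ncard_coe_finset,
    List.toFinset_card_of_nodup hp.support_nodup, List.length_tail, length_support,
    Nat.add_sub_cancel]

lemma IsCycle.isMatching_deleteEdges_of_isAlternating {G' : SimpleGraph V} {u : V}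
    {p : G.Walk u u} (hp : p.IsCycle) (halt : G.IsAlternating G') :
    (p.toSubgraph.deleteEdges G'.edgeSetᶜ).IsMatching := by
  intro v hv
  rw [Subgraph.deleteEdges_verts, mem_verts_toSubgraph] at hv
  obtain ⟨w, w', hww', hnbhd⟩ :=
    Set.ncard_eq_two.mp (hp.ncard_neighborSet_toSubgraph_eq_two hv)
  have hw : p.toSubgraph.Adj v w := by simp [← Subgraph.mem_neighborSet, hnbhd]
  have hw' : p.toSubgraph.Adj v w' := by simp [← Subgraph.mem_neighborSet, hnbhd]
  have hnb : ∀ x, p.toSubgraph.Adj v x → x = w ∨ x = w' := fun x hx => by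
    simpa [hnbhd] using (show x ∈ p.toSubgraph.neighborSet v from hx)
  have halt_vw := halt hww' hw.adj_sub hw'.adj_sub
  simp only [Subgraph.deleteEdges_adj, Set.mem_compl_iff, not_not]
  by_cases h : G'.Adj v w
  · exact ⟨w, ⟨hw, h⟩, fun x hx =>
      (hnb x hx.1).resolve_right (by rintro rfl; exact halt_vw.mp h hx.2)⟩
  · exact ⟨w', ⟨hw', not_not.mp (mt halt_vw.mpr h)⟩, fun x hx =>
      (hnb x hx.1).resolve_left (by rintro rfl; exact h hx.2)⟩

lemma IsCycle.even_length_of_isAlternating {G' : SimpleGraph V} {u : V}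
    {p : G.Walk u u} (hp : p.IsCycle) (halt : G.IsAlternating G') : Even p.length := by
  classical
  have : Fintype (p.toSubgraph.deleteEdges G'.edgeSetᶜ).verts := by
    rw [Subgraph.deleteEdges_verts, hp.verts_toSubgraph_eq_toFinset_tail]
    infer_instance
  have := (hp.isMatching_deleteEdges_of_isAlternating halt).even_card
  rwa [← Set.ncard_eq_toFinset_card', Subgraph.deleteEdges_verts,
    hp.ncard_verts_toSubgraph] at this

end Walk

namespace Subgraph

variable {M M' : G.Subgraph}

lemma mem_verts_of_adj_symmDiff (hv : M.verts = M'.verts) {v w : V}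
    (h : (M.spanningCoe ∆ M'.spanningCoe).Adj v w) : v ∈ M.verts := by
  rcases h with h | h
  exacts [M.edge_vert h.1, hv ▸ M'.edge_vert h.1]

lemma IsMatching.symmDiff_isCycles_of_verts_eq (hM : M.IsMatching) (hM' : M'.IsMatching)
    (hv : M.verts = M'.verts) : (M.spanningCoe ∆ M'.spanningCoe).IsCycles := by
  rintro v ⟨x, hx⟩
  have hvM := mem_verts_of_adj_symmDiff hv hx
  obtain ⟨w, hw⟩ := hM hvM
  obtain ⟨w', hw'⟩ := hM' (hv ▸ hvM)
  simp only [symmDiff_def, Set.ncard_eq_two, ne_eq, SimpleGraph.mem_neighborSet,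
    SimpleGraph.sup_adj, SimpleGraph.sdiff_adj, spanningCoe_adj] at hx ⊢
  by_cases hww' : w = w'
  · subst hww'
    aesop
  · use w, w'
    aesop

lemma IsMatching.isAlternating_symmDiff_left_of_verts_eq (hM : M.IsMatching)
    (hM' : M'.IsMatching) (hv : M.verts = M'.verts) :
    (M.spanningCoe ∆ M'.spanningCoe).IsAlternating M.spanningCoe := by
  intro v w w' hww' hvw hvw'
  have hvM := mem_verts_of_adj_symmDiff hv hvw
  obtain ⟨v₁, hm₁, hv₁⟩ := hM hvM
  obtain ⟨v₂, hm₂, hv₂⟩ := hM' (hv ▸ hvM)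
  simp only [symmDiff_def] at *
  aesop

lemma IsMatching.exists_isCycle_even_length_of_ne [Finite V] (hM : M.IsMatching)
    (hM' : M'.IsMatching) (hv : M.verts = M'.verts) (hne : M ≠ M') :
    ∃ (u : V) (c : G.Walk u u), c.IsCycle ∧ Even c.length := by
  obtain ⟨x, y, hxy⟩ : ∃ x y, (M.spanningCoe ∆ M'.spanningCoe).Adj x y := by
    by_contra! h
    refine hne (Subgraph.ext hv ?_)
    ext x y
    have := h x y
    simp only [symmDiff_def, SimpleGraph.sup_adj, SimpleGraph.sdiff_adj,
      spanningCoe_adj] at this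
    tauto
  obtain ⟨c, hc, -⟩ := (hM.symmDiff_isCycles_of_verts_eq hM' hv
    ).exists_cycle_toSubgraph_verts_eq_connectedComponentSupp
    (c := (M.spanningCoe ∆ M'.spanningCoe).connectedComponentMk x) rfl ⟨y, hxy⟩
  have hle : M.spanningCoe ∆ M'.spanningCoe ≤ G := fun a b hab => by
    rcases hab with h | h
    exacts [h.1.adj_sub, h.1.adj_sub]
  have halt := hM.isAlternating_symmDiff_left_of_verts_eq hM' hv
  exact ⟨x, c.mapLe hle, hc.mapLe hle, by simpa using hc.even_length_of_isAlternating halt⟩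

end Subgraph

end SimpleGraph

namespace MatchingPowers

lemma hasAtMostOnePerfectMatching_iff_forall_isMatching {V : Type*} (G : SimpleGraph V) :
    HasAtMostOnePerfectMatching G ↔ ∀ M₁ M₂ : G.Subgraph,
      M₁.IsMatching → M₂.IsMatching → M₁.verts = M₂.verts → M₁ = M₂ := by
  refine ⟨fun h M₁ M₂ hM₁ hM₂ hv => ?_,
    fun h _ M₁ M₂ _ h₁ hM₁ _ h₂ hM₂ => h M₁ M₂ hM₁ hM₂ (h₁.trans h₂.symm)⟩
  exact h (M₁ ⊔ M₂) M₁ M₂ le_sup_left (by simp [hv]) hM₁ le_sup_right (by simp [hv]) hM₂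

theorem hasAtMostOnePerfectMatching_iff_no_even_cycle_general (V : Type) [Fintype V]
    (G : SimpleGraph V) :
    HasAtMostOnePerfectMatching G
      ↔ ∀ (v : V) (c : G.Walk v v), c.IsCycle → ¬ Even c.length := by
  rw [hasAtMostOnePerfectMatching_iff_forall_isMatching]
  constructor
  · intro h v c hc he
    obtain ⟨M₁, M₂, hM₁, hM₂, hv, hne⟩ := hc.exists_isMatching_ne_of_even_length he
    exact hne (h M₁ M₂ hM₁ hM₂ hv)
  · intro h M₁ M₂ hM₁ hM₂ hv
    by_contra hne
    obtain ⟨v, c, hc, he⟩ := hM₁.exists_isCycle_even_length_of_ne hM₂ hv hne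
    exact h v c hc he

/-- A finite simple graph without isolated vertices has the property that
every subgraph has at most one perfect matching if and only if it has no even cycles. -/
theorem hasAtMostOnePerfectMatching_iff_no_even_cycle (V : Type) [Fintype V]
    (G : SimpleGraph V) (hni : ∀ v : V, ∃ u : V, G.Adj v u) :
    HasAtMostOnePerfectMatching G
      ↔ ∀ (v : V) (c : G.Walk v v), c.IsCycle → ¬ Even c.length :=
  hasAtMostOnePerfectMatching_iff_no_even_cycle_general V G

end MatchingPowers
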